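/- arXiv:2509.19859 — 3 statements merged into one kernel-verified Lean document; each statement's English description precedes it below -/
import Mathlib

section
/- Let E be a real inner product space, λ > 0, and let 0 ≤ ū < v̄ be real constants. Let Ψ : ℝ → ℝ satisfy Ψ(1) = 1, and let x, ξ : ℝ → E be differentiable trajectories such that: (i) ‖ξ'(t)‖ ≤ ū for all t; (ii) for every t with e(t) := x(t) − ξ(t) ≠ 0, the velocity obeys the confinement law x'(t) = −(v̄·Ψ(‖e(t)‖/λ)/‖e(t)‖)·e(t); and (iii) ‖e(0)‖ < λ. Then ‖x(t) − ξ(t)‖ < λ for all t ≥ 0. -/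
/-!
The squared distance `‖x - ξ‖²` starts below `λ²`. Whenever it equals `λ²`, `Ψ(1) = 1` makes
the law move `x` straight toward `ξ` at speed exactly `v̄`, while `ξ` moves at speed at most
`ū`, so its derivative `2⟪x - ξ, x' - ξ'⟫ ≤ 2(ū - v̄)λ` is negative: the level `λ²` can never
be reached from below.
-/

open Set

local notation "⟪" a ", " b "⟫" => @inner ℝ _ _ a b

/-- The fencing theorem gives `f ≤ c`; a point `t > 0` with `f t = c` would then be a local
maximum, where the derivative vanishes. -/
theorem lt_const_of_deriv_neg_at_level {f f' : ℝ → ℝ} {c : ℝ}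
    (hf : ∀ t, 0 ≤ t → HasDerivAt f (f' t) t) (h0 : f 0 < c)
    (hlevel : ∀ t, 0 < t → f t = c → f' t < 0) :
    ∀ t, 0 ≤ t → f t < c := by
  have hle : ∀ t, 0 ≤ t → f t ≤ c := fun t ht =>
    image_le_of_deriv_right_lt_deriv_boundary' (a := 0) (b := t) (B := fun _ => c) (B' := 0)
      (fun s hs => (hf s hs.1).continuousAt.continuousWithinAt)
      (fun s hs => (hf s hs.1).hasDerivWithinAt) h0.le continuousOn_const
      (fun _ _ => hasDerivWithinAt_const _ _ _)
      (fun s hs hfs => hlevel s (hs.1.lt_of_ne (by rintro rfl; exact h0.ne hfs)) hfs)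
      ⟨ht, le_rfl⟩
  intro t ht
  refine (hle t ht).lt_of_ne fun hft => ?_
  have htpos : 0 < t := ht.lt_of_ne (by rintro rfl; exact h0.ne hft)
  have hmax : IsLocalMax f t := by
    filter_upwards [Ici_mem_nhds htpos] with s hs
    exact hft ▸ hle s hs
  exact (hlevel t htpos hft).ne (hmax.hasDerivAt_eq_zero (hf t ht))

section InnerProductSpace

variable {E : Type*} [NormedAddCommGroup E] [InnerProductSpace ℝ E]

theorem inner_neg_div_norm_smul_self (a : ℝ) (e : E) : ⟪e, -(a / ‖e‖) • e⟫ = -(a * ‖e‖) := by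
  rcases eq_or_ne e 0 with rfl | he
  · simp
  rw [real_inner_smul_right, real_inner_self_eq_norm_sq]
  field_simp

theorem inner_confinement_law_sub_le {lam ubar vbar : ℝ} {Ψ : ℝ → ℝ} (hΨ1 : Ψ 1 = 1)
    {e w : E} (he : ‖e‖ = lam) (hw : ‖w‖ ≤ ubar) :
    ⟪e, -(vbar * Ψ (‖e‖ / lam) / ‖e‖) • e - w⟫ ≤ (ubar - vbar) * lam := by
  rcases eq_or_ne lam 0 with rfl | hlam
  · simp [norm_eq_zero.1 he]
  have hw' : -(ubar * lam) ≤ ⟪e, w⟫ := by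
    have := abs_real_inner_le_norm e w
    rw [he] at this
    nlinarith [neg_abs_le ⟪e, w⟫, norm_nonneg e]
  rw [inner_sub_right, inner_neg_div_norm_smul_self, he, div_self hlam, hΨ1]
  linarith

end InnerProductSpace

theorem stageI_confinement_general
    {E : Type*} [NormedAddCommGroup E] [InnerProductSpace ℝ E]
    (lam : ℝ) (hlam : 0 < lam)
    (ubar vbar : ℝ) (huv : ubar < vbar)
    (Ψ : ℝ → ℝ) (hΨ1 : Ψ 1 = 1)
    (x ξ : ℝ → E) (hx : Differentiable ℝ x) (hξ : Differentiable ℝ ξ)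
    (hξbound : ∀ t : ℝ, ‖deriv ξ t‖ ≤ ubar)
    (hlaw : ∀ t : ℝ, x t - ξ t ≠ 0 →
      deriv x t = -(vbar * Ψ (‖x t - ξ t‖ / lam) / ‖x t - ξ t‖) • (x t - ξ t))
    (h0 : ‖x 0 - ξ 0‖ < lam) :
    ∀ t : ℝ, 0 ≤ t → ‖x t - ξ t‖ < lam := by
  have hderiv : ∀ t, 0 ≤ t → HasDerivAt (fun s => ‖x s - ξ s‖ ^ 2)
      (2 * ⟪x t - ξ t, deriv x t - deriv ξ t⟫) t := fun t _ =>
    ((hx t).hasDerivAt.sub (hξ t).hasDerivAt).norm_sq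
  have hsq := lt_const_of_deriv_neg_at_level hderiv
    (pow_lt_pow_left₀ h0 (norm_nonneg _) two_ne_zero) fun t _ hboundary => by
      have he : ‖x t - ξ t‖ = lam := (sq_eq_sq₀ (norm_nonneg _) hlam.le).1 hboundary
      have hne : x t - ξ t ≠ 0 := norm_pos_iff.1 (he ▸ hlam)
      rw [hlaw t hne]
      nlinarith [inner_confinement_law_sub_le (vbar := vbar) hΨ1 he (hξbound t)]
  exact fun t ht => (sq_lt_sq₀ (norm_nonneg _) hlam.le).1 (hsq t ht)

/-- Stage I of Theorem 4: the velocity-level confinement law keeps the system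
configuration `x` strictly inside the Virtual Confinement Zone ball of radius λ
around the moving center `ξ`, provided the feasibility condition `ū < v̄` holds. -/
theorem stageI_confinement
    {E : Type*} [NormedAddCommGroup E] [InnerProductSpace ℝ E]
    (lam : ℝ) (hlam : 0 < lam)
    (ubar vbar : ℝ) (hubar : 0 ≤ ubar) (huv : ubar < vbar)
    (Ψ : ℝ → ℝ) (hΨ1 : Ψ 1 = 1)
    (x ξ : ℝ → E) (hx : Differentiable ℝ x) (hξ : Differentiable ℝ ξ)
    (hξbound : ∀ t : ℝ, ‖deriv ξ t‖ ≤ ubar)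
    (hlaw : ∀ t : ℝ, x t - ξ t ≠ 0 →
      deriv x t = -(vbar * Ψ (‖x t - ξ t‖ / lam) / ‖x t - ξ t‖) • (x t - ξ t))
    (h0 : ‖x 0 - ξ 0‖ < lam) :
    ∀ t : ℝ, 0 ≤ t → ‖x t - ξ t‖ < lam :=
  stageI_confinement_general lam hlam ubar vbar huv Ψ hΨ1 x ξ hx hξ hξbound hlaw h0
end

section
/- For every e ∈ (0, 1], one has (tanh(1.8·e))³ ≤ (9/10)·e; equivalently, the ratio Ψ(e)/e with Ψ(e) = tanh³(1.8·e) is at most 9/10 on the interval (0, 1]. -/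
private lemma exp_tenth : Real.exp (1/10) ≤ 1.1051719 := by
  have h := Real.exp_bound' (x := 1/10) (by norm_num) (by norm_num) (n := 4) (by norm_num)
  simp [Finset.sum_range_succ, Nat.factorial] at h
  norm_num at h ⊢
  linarith

private lemma expk (k : ℕ) (F : ℝ) (h : (1.1051719:ℝ)^k ≤ F) :
    Real.exp ((k:ℝ)/10) ≤ F := by
  have ha : ((k:ℝ)/10) = (k:ℝ)*(1/10) := by ring
  rw [ha, Real.exp_nat_mul]
  exact le_trans (pow_le_pow_left₀ (Real.exp_nonneg _) exp_tenth k) h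

private lemma piece (a F u : ℝ) (hFe : Real.exp (2*a) ≤ F) (ha : 0 ≤ a)
    (h1 : a ≤ u) (h2 : u ≤ a + 1/20)
    (hq : 2*(F - (1 - 2*(u-a)))^3 ≤ u * (F + (1 - 2*(u-a)))^3) :
    Real.tanh u ^ 3 ≤ u / 2 := by
  set m : ℝ := 1 - 2*(u-a) with hmdef
  have hm0 : (9:ℝ)/10 ≤ m := by simp [hmdef]; linarith
  have hm1 : m ≤ 1 := by simp [hmdef]; linarith
  have hF1 : 1 ≤ F := le_trans (Real.one_le_exp (by linarith : (0:ℝ) ≤ 2*a)) hFe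
  have hδ : Real.exp (2*(u-a)) * m ≤ 1 := by
    have h := Real.add_one_le_exp (-(2*(u-a)))
    have hp := Real.exp_pos (2*(u-a))
    have : Real.exp (2*(u-a)) * Real.exp (-(2*(u-a))) = 1 := by
      rw [← Real.exp_add]; ring_nf; exact Real.exp_zero
    nlinarith
  have hE : Real.exp (2*u) * m ≤ F := by
    have hsplit : Real.exp (2*u) = Real.exp (2*a) * Real.exp (2*(u-a)) := by
      rw [← Real.exp_add]; ring_nf
    have hpa := Real.exp_pos (2*a)
    calc Real.exp (2*u) * m = Real.exp (2*a) * (Real.exp (2*(u-a)) * m) := by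
          rw [hsplit]; ring
      _ ≤ Real.exp (2*a) * 1 := by
          apply mul_le_mul_of_nonneg_left hδ hpa.le
      _ ≤ F := by linarith
  have htpos : (0:ℝ) < Real.exp u := Real.exp_pos u
  have htanh : Real.tanh u ≤ (F - m)/(F + m) := by
    rw [Real.tanh_eq_sinh_div_cosh, div_le_div_iff₀ (Real.cosh_pos u) (by linarith : (0:ℝ) < F + m)]
    rw [Real.sinh_eq, Real.cosh_eq, Real.exp_neg]
    have hsq : Real.exp u * Real.exp u = Real.exp (2*u) := by
      rw [← Real.exp_add]; ring_nf
    have hinv : Real.exp u * (Real.exp u)⁻¹ = 1 := mul_inv_cancel₀ htpos.ne'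
    have hinvpos : (0:ℝ) < (Real.exp u)⁻¹ := by positivity
    have h5 : Real.exp u * m ≤ F * (Real.exp u)⁻¹ := by
      have h3 := mul_le_mul_of_nonneg_right hE hinvpos.le
      calc Real.exp u * m = (Real.exp (2*u) * m) * (Real.exp u)⁻¹ := by
            rw [← hsq]; field_simp
        _ ≤ F * (Real.exp u)⁻¹ := h3
    nlinarith [Real.exp_pos u]
  have htnn : 0 ≤ Real.tanh u := by
    rw [Real.tanh_eq_sinh_div_cosh]
    exact div_nonneg (Real.sinh_nonneg_iff.mpr (by linarith)) (Real.cosh_pos u).le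
  have hcube : Real.tanh u ^ 3 ≤ ((F - m)/(F + m))^3 := pow_le_pow_left₀ htnn htanh 3
  refine hcube.trans ?_
  rw [div_pow, div_le_div_iff₀ (by positivity) (by norm_num : (0:ℝ) < 2)]
  linarith


set_option maxHeartbeats 1000000 in
private lemma case_0 (u : ℝ) (h1 : (0:ℝ)/20 ≤ u) (h2 : u ≤ (1:ℝ)/20) :
    Real.tanh u ^ 3 ≤ u / 2 := by
  refine piece (0/20) (10000000/10000000) u ?_ (by norm_num) (by linarith) (by linarith) ?_
  · have h := expk 0 (10000000/10000000) (by norm_num)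
    norm_num at h ⊢
    try linarith
  · nlinarith [sq_nonneg (u - 0/20), sq_nonneg (u - 1/20), sq_nonneg (u - 1/40),
      mul_nonneg (by linarith : (0:ℝ) ≤ u - 0/20) (by linarith : (0:ℝ) ≤ (1:ℝ)/20 - u)]

set_option maxHeartbeats 1000000 in
private lemma case_1 (u : ℝ) (h1 : (1:ℝ)/20 ≤ u) (h2 : u ≤ (2:ℝ)/20) :
    Real.tanh u ^ 3 ≤ u / 2 := by
  refine piece (1/20) (11051719/10000000) u ?_ (by norm_num) (by linarith) (by linarith) ?_
  · have h := expk 1 (11051719/10000000) (by norm_num)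
    norm_num at h ⊢
    try linarith
  · nlinarith [sq_nonneg (u - 1/20), sq_nonneg (u - 2/20), sq_nonneg (u - 3/40),
      mul_nonneg (by linarith : (0:ℝ) ≤ u - 1/20) (by linarith : (0:ℝ) ≤ (2:ℝ)/20 - u)]

set_option maxHeartbeats 1000000 in
private lemma case_2 (u : ℝ) (h1 : (2:ℝ)/20 ≤ u) (h2 : u ≤ (3:ℝ)/20) :
    Real.tanh u ^ 3 ≤ u / 2 := by
  refine piece (2/20) (12214050/10000000) u ?_ (by norm_num) (by linarith) (by linarith) ?_
  · have h := expk 2 (12214050/10000000) (by norm_num)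
    norm_num at h ⊢
    try linarith
  · nlinarith [sq_nonneg (u - 2/20), sq_nonneg (u - 3/20), sq_nonneg (u - 5/40),
      mul_nonneg (by linarith : (0:ℝ) ≤ u - 2/20) (by linarith : (0:ℝ) ≤ (3:ℝ)/20 - u)]

set_option maxHeartbeats 1000000 in
private lemma case_3 (u : ℝ) (h1 : (3:ℝ)/20 ≤ u) (h2 : u ≤ (4:ℝ)/20) :
    Real.tanh u ^ 3 ≤ u / 2 := by
  refine piece (3/20) (13498625/10000000) u ?_ (by norm_num) (by linarith) (by linarith) ?_
  · have h := expk 3 (13498625/10000000) (by norm_num)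
    norm_num at h ⊢
    try linarith
  · nlinarith [sq_nonneg (u - 3/20), sq_nonneg (u - 4/20), sq_nonneg (u - 7/40),
      mul_nonneg (by linarith : (0:ℝ) ≤ u - 3/20) (by linarith : (0:ℝ) ≤ (4:ℝ)/20 - u)]

set_option maxHeartbeats 1000000 in
private lemma case_4 (u : ℝ) (h1 : (4:ℝ)/20 ≤ u) (h2 : u ≤ (5:ℝ)/20) :
    Real.tanh u ^ 3 ≤ u / 2 := by
  refine piece (4/20) (14918300/10000000) u ?_ (by norm_num) (by linarith) (by linarith) ?_
  · have h := expk 4 (14918300/10000000) (by norm_num)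
    norm_num at h ⊢
    try linarith
  · nlinarith [sq_nonneg (u - 4/20), sq_nonneg (u - 5/20), sq_nonneg (u - 9/40),
      mul_nonneg (by linarith : (0:ℝ) ≤ u - 4/20) (by linarith : (0:ℝ) ≤ (5:ℝ)/20 - u)]

set_option maxHeartbeats 1000000 in
private lemma case_5 (u : ℝ) (h1 : (5:ℝ)/20 ≤ u) (h2 : u ≤ (6:ℝ)/20) :
    Real.tanh u ^ 3 ≤ u / 2 := by
  refine piece (5/20) (16487286/10000000) u ?_ (by norm_num) (by linarith) (by linarith) ?_
  · have h := expk 5 (16487286/10000000) (by norm_num)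
    norm_num at h ⊢
    try linarith
  · nlinarith [sq_nonneg (u - 5/20), sq_nonneg (u - 6/20), sq_nonneg (u - 11/40),
      mul_nonneg (by linarith : (0:ℝ) ≤ u - 5/20) (by linarith : (0:ℝ) ≤ (6:ℝ)/20 - u)]

set_option maxHeartbeats 1000000 in
private lemma case_6 (u : ℝ) (h1 : (6:ℝ)/20 ≤ u) (h2 : u ≤ (7:ℝ)/20) :
    Real.tanh u ^ 3 ≤ u / 2 := by
  refine piece (6/20) (18221286/10000000) u ?_ (by norm_num) (by linarith) (by linarith) ?_
  · have h := expk 6 (18221286/10000000) (by norm_num)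
    norm_num at h ⊢
    try linarith
  · nlinarith [sq_nonneg (u - 6/20), sq_nonneg (u - 7/20), sq_nonneg (u - 13/40),
      mul_nonneg (by linarith : (0:ℝ) ≤ u - 6/20) (by linarith : (0:ℝ) ≤ (7:ℝ)/20 - u)]

set_option maxHeartbeats 1000000 in
private lemma case_7 (u : ℝ) (h1 : (7:ℝ)/20 ≤ u) (h2 : u ≤ (8:ℝ)/20) :
    Real.tanh u ^ 3 ≤ u / 2 := by
  refine piece (7/20) (20137653/10000000) u ?_ (by norm_num) (by linarith) (by linarith) ?_
  · have h := expk 7 (20137653/10000000) (by norm_num)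
    norm_num at h ⊢
    try linarith
  · nlinarith [sq_nonneg (u - 7/20), sq_nonneg (u - 8/20), sq_nonneg (u - 15/40),
      mul_nonneg (by linarith : (0:ℝ) ≤ u - 7/20) (by linarith : (0:ℝ) ≤ (8:ℝ)/20 - u)]

set_option maxHeartbeats 1000000 in
private lemma case_8 (u : ℝ) (h1 : (8:ℝ)/20 ≤ u) (h2 : u ≤ (9:ℝ)/20) :
    Real.tanh u ^ 3 ≤ u / 2 := by
  refine piece (8/20) (22255568/10000000) u ?_ (by norm_num) (by linarith) (by linarith) ?_
  · have h := expk 8 (22255568/10000000) (by norm_num)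
    norm_num at h ⊢
    try linarith
  · nlinarith [sq_nonneg (u - 8/20), sq_nonneg (u - 9/20), sq_nonneg (u - 17/40),
      mul_nonneg (by linarith : (0:ℝ) ≤ u - 8/20) (by linarith : (0:ℝ) ≤ (9:ℝ)/20 - u)]

set_option maxHeartbeats 1000000 in
private lemma case_9 (u : ℝ) (h1 : (9:ℝ)/20 ≤ u) (h2 : u ≤ (10:ℝ)/20) :
    Real.tanh u ^ 3 ≤ u / 2 := by
  refine piece (9/20) (24596228/10000000) u ?_ (by norm_num) (by linarith) (by linarith) ?_
  · have h := expk 9 (24596228/10000000) (by norm_num)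
    norm_num at h ⊢
    try linarith
  · nlinarith [sq_nonneg (u - 9/20), sq_nonneg (u - 10/20), sq_nonneg (u - 19/40),
      mul_nonneg (by linarith : (0:ℝ) ≤ u - 9/20) (by linarith : (0:ℝ) ≤ (10:ℝ)/20 - u)]

set_option maxHeartbeats 1000000 in
private lemma case_10 (u : ℝ) (h1 : (10:ℝ)/20 ≤ u) (h2 : u ≤ (11:ℝ)/20) :
    Real.tanh u ^ 3 ≤ u / 2 := by
  refine piece (10/20) (27183060/10000000) u ?_ (by norm_num) (by linarith) (by linarith) ?_
  · have h := expk 10 (27183060/10000000) (by norm_num)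
    norm_num at h ⊢
    try linarith
  · nlinarith [sq_nonneg (u - 10/20), sq_nonneg (u - 11/20), sq_nonneg (u - 21/40),
      mul_nonneg (by linarith : (0:ℝ) ≤ u - 10/20) (by linarith : (0:ℝ) ≤ (11:ℝ)/20 - u)]

set_option maxHeartbeats 1000000 in
private lemma case_11 (u : ℝ) (h1 : (11:ℝ)/20 ≤ u) (h2 : u ≤ (12:ℝ)/20) :
    Real.tanh u ^ 3 ≤ u / 2 := by
  refine piece (11/20) (30041954/10000000) u ?_ (by norm_num) (by linarith) (by linarith) ?_
  · have h := expk 11 (30041954/10000000) (by norm_num)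
    norm_num at h ⊢
    try linarith
  · nlinarith [sq_nonneg (u - 11/20), sq_nonneg (u - 12/20), sq_nonneg (u - 23/40),
      mul_nonneg (by linarith : (0:ℝ) ≤ u - 11/20) (by linarith : (0:ℝ) ≤ (12:ℝ)/20 - u)]

set_option maxHeartbeats 1000000 in
private lemma case_12 (u : ℝ) (h1 : (12:ℝ)/20 ≤ u) (h2 : u ≤ (13:ℝ)/20) :
    Real.tanh u ^ 3 ≤ u / 2 := by
  refine piece (12/20) (33201524/10000000) u ?_ (by norm_num) (by linarith) (by linarith) ?_
  · have h := expk 12 (33201524/10000000) (by norm_num)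
    norm_num at h ⊢
    try linarith
  · nlinarith [sq_nonneg (u - 12/20), sq_nonneg (u - 13/20), sq_nonneg (u - 25/40),
      mul_nonneg (by linarith : (0:ℝ) ≤ u - 12/20) (by linarith : (0:ℝ) ≤ (13:ℝ)/20 - u)]

set_option maxHeartbeats 1000000 in
private lemma case_13 (u : ℝ) (h1 : (13:ℝ)/20 ≤ u) (h2 : u ≤ (14:ℝ)/20) :
    Real.tanh u ^ 3 ≤ u / 2 := by
  refine piece (13/20) (36693391/10000000) u ?_ (by norm_num) (by linarith) (by linarith) ?_
  · have h := expk 13 (36693391/10000000) (by norm_num)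
    norm_num at h ⊢
    try linarith
  · nlinarith [sq_nonneg (u - 13/20), sq_nonneg (u - 14/20), sq_nonneg (u - 27/40),
      mul_nonneg (by linarith : (0:ℝ) ≤ u - 13/20) (by linarith : (0:ℝ) ≤ (14:ℝ)/20 - u)]

set_option maxHeartbeats 1000000 in
private lemma case_14 (u : ℝ) (h1 : (14:ℝ)/20 ≤ u) (h2 : u ≤ (15:ℝ)/20) :
    Real.tanh u ^ 3 ≤ u / 2 := by
  refine piece (14/20) (40552505/10000000) u ?_ (by norm_num) (by linarith) (by linarith) ?_
  · have h := expk 14 (40552505/10000000) (by norm_num)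
    norm_num at h ⊢
    try linarith
  · nlinarith [sq_nonneg (u - 14/20), sq_nonneg (u - 15/20), sq_nonneg (u - 29/40),
      mul_nonneg (by linarith : (0:ℝ) ≤ u - 14/20) (by linarith : (0:ℝ) ≤ (15:ℝ)/20 - u)]

set_option maxHeartbeats 1000000 in
private lemma case_15 (u : ℝ) (h1 : (15:ℝ)/20 ≤ u) (h2 : u ≤ (16:ℝ)/20) :
    Real.tanh u ^ 3 ≤ u / 2 := by
  refine piece (15/20) (44817488/10000000) u ?_ (by norm_num) (by linarith) (by linarith) ?_
  · have h := expk 15 (44817488/10000000) (by norm_num)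
    norm_num at h ⊢
    try linarith
  · nlinarith [sq_nonneg (u - 15/20), sq_nonneg (u - 16/20), sq_nonneg (u - 31/40),
      mul_nonneg (by linarith : (0:ℝ) ≤ u - 15/20) (by linarith : (0:ℝ) ≤ (16:ℝ)/20 - u)]

set_option maxHeartbeats 1000000 in
private lemma case_16 (u : ℝ) (h1 : (16:ℝ)/20 ≤ u) (h2 : u ≤ (17:ℝ)/20) :
    Real.tanh u ^ 3 ≤ u / 2 := by
  refine piece (16/20) (49531029/10000000) u ?_ (by norm_num) (by linarith) (by linarith) ?_
  · have h := expk 16 (49531029/10000000) (by norm_num)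
    norm_num at h ⊢
    try linarith
  · nlinarith [sq_nonneg (u - 16/20), sq_nonneg (u - 17/20), sq_nonneg (u - 33/40),
      mul_nonneg (by linarith : (0:ℝ) ≤ u - 16/20) (by linarith : (0:ℝ) ≤ (17:ℝ)/20 - u)]

set_option maxHeartbeats 1000000 in
private lemma case_17 (u : ℝ) (h1 : (17:ℝ)/20 ≤ u) (h2 : u ≤ (18:ℝ)/20) :
    Real.tanh u ^ 3 ≤ u / 2 := by
  refine piece (17/20) (54740301/10000000) u ?_ (by norm_num) (by linarith) (by linarith) ?_
  · have h := expk 17 (54740301/10000000) (by norm_num)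
    norm_num at h ⊢
    try linarith
  · nlinarith [sq_nonneg (u - 17/20), sq_nonneg (u - 18/20), sq_nonneg (u - 35/40),
      mul_nonneg (by linarith : (0:ℝ) ≤ u - 17/20) (by linarith : (0:ℝ) ≤ (18:ℝ)/20 - u)]

set_option maxHeartbeats 1000000 in
private lemma case_18 (u : ℝ) (h1 : (18:ℝ)/20 ≤ u) (h2 : u ≤ (19:ℝ)/20) :
    Real.tanh u ^ 3 ≤ u / 2 := by
  refine piece (18/20) (60497443/10000000) u ?_ (by norm_num) (by linarith) (by linarith) ?_
  · have h := expk 18 (60497443/10000000) (by norm_num)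
    norm_num at h ⊢
    try linarith
  · nlinarith [sq_nonneg (u - 18/20), sq_nonneg (u - 19/20), sq_nonneg (u - 37/40),
      mul_nonneg (by linarith : (0:ℝ) ≤ u - 18/20) (by linarith : (0:ℝ) ≤ (19:ℝ)/20 - u)]

set_option maxHeartbeats 1000000 in
private lemma case_19 (u : ℝ) (h1 : (19:ℝ)/20 ≤ u) (h2 : u ≤ (20:ℝ)/20) :
    Real.tanh u ^ 3 ≤ u / 2 := by
  refine piece (19/20) (66860074/10000000) u ?_ (by norm_num) (by linarith) (by linarith) ?_
  · have h := expk 19 (66860074/10000000) (by norm_num)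
    norm_num at h ⊢
    try linarith
  · nlinarith [sq_nonneg (u - 19/20), sq_nonneg (u - 20/20), sq_nonneg (u - 39/40),
      mul_nonneg (by linarith : (0:ℝ) ≤ u - 19/20) (by linarith : (0:ℝ) ≤ (20:ℝ)/20 - u)]

set_option maxHeartbeats 1000000 in
private lemma case_20 (u : ℝ) (h1 : (20:ℝ)/20 ≤ u) (h2 : u ≤ (21:ℝ)/20) :
    Real.tanh u ^ 3 ≤ u / 2 := by
  refine piece (20/20) (73891875/10000000) u ?_ (by norm_num) (by linarith) (by linarith) ?_
  · have h := expk 20 (73891875/10000000) (by norm_num)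
    norm_num at h ⊢
    try linarith
  · nlinarith [sq_nonneg (u - 20/20), sq_nonneg (u - 21/20), sq_nonneg (u - 41/40),
      mul_nonneg (by linarith : (0:ℝ) ≤ u - 20/20) (by linarith : (0:ℝ) ≤ (21:ℝ)/20 - u)]

set_option maxHeartbeats 1000000 in
private lemma case_21 (u : ℝ) (h1 : (21:ℝ)/20 ≤ u) (h2 : u ≤ (22:ℝ)/20) :
    Real.tanh u ^ 3 ≤ u / 2 := by
  refine piece (21/20) (81663223/10000000) u ?_ (by norm_num) (by linarith) (by linarith) ?_
  · have h := expk 21 (81663223/10000000) (by norm_num)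
    norm_num at h ⊢
    try linarith
  · nlinarith [sq_nonneg (u - 21/20), sq_nonneg (u - 22/20), sq_nonneg (u - 43/40),
      mul_nonneg (by linarith : (0:ℝ) ≤ u - 21/20) (by linarith : (0:ℝ) ≤ (22:ℝ)/20 - u)]

set_option maxHeartbeats 1000000 in
private lemma case_22 (u : ℝ) (h1 : (22:ℝ)/20 ≤ u) (h2 : u ≤ (23:ℝ)/20) :
    Real.tanh u ^ 3 ≤ u / 2 := by
  refine piece (22/20) (90251900/10000000) u ?_ (by norm_num) (by linarith) (by linarith) ?_
  · have h := expk 22 (90251900/10000000) (by norm_num)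
    norm_num at h ⊢
    try linarith
  · nlinarith [sq_nonneg (u - 22/20), sq_nonneg (u - 23/20), sq_nonneg (u - 45/40),
      mul_nonneg (by linarith : (0:ℝ) ≤ u - 22/20) (by linarith : (0:ℝ) ≤ (23:ℝ)/20 - u)]

set_option maxHeartbeats 1000000 in
private lemma case_23 (u : ℝ) (h1 : (23:ℝ)/20 ≤ u) (h2 : u ≤ (24:ℝ)/20) :
    Real.tanh u ^ 3 ≤ u / 2 := by
  refine piece (23/20) (99743863/10000000) u ?_ (by norm_num) (by linarith) (by linarith) ?_
  · have h := expk 23 (99743863/10000000) (by norm_num)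
    norm_num at h ⊢
    try linarith
  · nlinarith [sq_nonneg (u - 23/20), sq_nonneg (u - 24/20), sq_nonneg (u - 47/40),
      mul_nonneg (by linarith : (0:ℝ) ≤ u - 23/20) (by linarith : (0:ℝ) ≤ (24:ℝ)/20 - u)]

set_option maxHeartbeats 1000000 in
private lemma case_24 (u : ℝ) (h1 : (24:ℝ)/20 ≤ u) (h2 : u ≤ (25:ℝ)/20) :
    Real.tanh u ^ 3 ≤ u / 2 := by
  refine piece (24/20) (110234115/10000000) u ?_ (by norm_num) (by linarith) (by linarith) ?_
  · have h := expk 24 (110234115/10000000) (by norm_num)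
    norm_num at h ⊢
    try linarith
  · nlinarith [sq_nonneg (u - 24/20), sq_nonneg (u - 25/20), sq_nonneg (u - 49/40),
      mul_nonneg (by linarith : (0:ℝ) ≤ u - 24/20) (by linarith : (0:ℝ) ≤ (25:ℝ)/20 - u)]

set_option maxHeartbeats 1000000 in
private lemma case_25 (u : ℝ) (h1 : (25:ℝ)/20 ≤ u) (h2 : u ≤ (26:ℝ)/20) :
    Real.tanh u ^ 3 ≤ u / 2 := by
  refine piece (25/20) (121827646/10000000) u ?_ (by norm_num) (by linarith) (by linarith) ?_
  · have h := expk 25 (121827646/10000000) (by norm_num)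
    norm_num at h ⊢
    try linarith
  · nlinarith [sq_nonneg (u - 25/20), sq_nonneg (u - 26/20), sq_nonneg (u - 51/40),
      mul_nonneg (by linarith : (0:ℝ) ≤ u - 25/20) (by linarith : (0:ℝ) ≤ (26:ℝ)/20 - u)]

set_option maxHeartbeats 1000000 in
private lemma case_26 (u : ℝ) (h1 : (26:ℝ)/20 ≤ u) (h2 : u ≤ (27:ℝ)/20) :
    Real.tanh u ^ 3 ≤ u / 2 := by
  refine piece (26/20) (134640491/10000000) u ?_ (by norm_num) (by linarith) (by linarith) ?_
  · have h := expk 26 (134640491/10000000) (by norm_num)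
    norm_num at h ⊢
    try linarith
  · nlinarith [sq_nonneg (u - 26/20), sq_nonneg (u - 27/20), sq_nonneg (u - 53/40),
      mul_nonneg (by linarith : (0:ℝ) ≤ u - 26/20) (by linarith : (0:ℝ) ≤ (27:ℝ)/20 - u)]

set_option maxHeartbeats 1000000 in
private lemma case_27 (u : ℝ) (h1 : (27:ℝ)/20 ≤ u) (h2 : u ≤ (28:ℝ)/20) :
    Real.tanh u ^ 3 ≤ u / 2 := by
  refine piece (27/20) (148800887/10000000) u ?_ (by norm_num) (by linarith) (by linarith) ?_
  · have h := expk 27 (148800887/10000000) (by norm_num)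
    norm_num at h ⊢
    try linarith
  · nlinarith [sq_nonneg (u - 27/20), sq_nonneg (u - 28/20), sq_nonneg (u - 55/40),
      mul_nonneg (by linarith : (0:ℝ) ≤ u - 27/20) (by linarith : (0:ℝ) ≤ (28:ℝ)/20 - u)]

set_option maxHeartbeats 1000000 in
private lemma case_28 (u : ℝ) (h1 : (28:ℝ)/20 ≤ u) (h2 : u ≤ (29:ℝ)/20) :
    Real.tanh u ^ 3 ≤ u / 2 := by
  refine piece (28/20) (164450559/10000000) u ?_ (by norm_num) (by linarith) (by linarith) ?_
  · have h := expk 28 (164450559/10000000) (by norm_num)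
    norm_num at h ⊢
    try linarith
  · nlinarith [sq_nonneg (u - 28/20), sq_nonneg (u - 29/20), sq_nonneg (u - 57/40),
      mul_nonneg (by linarith : (0:ℝ) ≤ u - 28/20) (by linarith : (0:ℝ) ≤ (29:ℝ)/20 - u)]

set_option maxHeartbeats 1000000 in
private lemma case_29 (u : ℝ) (h1 : (29:ℝ)/20 ≤ u) (h2 : u ≤ (30:ℝ)/20) :
    Real.tanh u ^ 3 ≤ u / 2 := by
  refine piece (29/20) (181746137/10000000) u ?_ (by norm_num) (by linarith) (by linarith) ?_
  · have h := expk 29 (181746137/10000000) (by norm_num)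
    norm_num at h ⊢
    try linarith
  · nlinarith [sq_nonneg (u - 29/20), sq_nonneg (u - 30/20), sq_nonneg (u - 59/40),
      mul_nonneg (by linarith : (0:ℝ) ≤ u - 29/20) (by linarith : (0:ℝ) ≤ (30:ℝ)/20 - u)]

set_option maxHeartbeats 1000000 in
private lemma case_30 (u : ℝ) (h1 : (30:ℝ)/20 ≤ u) (h2 : u ≤ (31:ℝ)/20) :
    Real.tanh u ^ 3 ≤ u / 2 := by
  refine piece (30/20) (200860723/10000000) u ?_ (by norm_num) (by linarith) (by linarith) ?_
  · have h := expk 30 (200860723/10000000) (by norm_num)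
    norm_num at h ⊢
    try linarith
  · nlinarith [sq_nonneg (u - 30/20), sq_nonneg (u - 31/20), sq_nonneg (u - 61/40),
      mul_nonneg (by linarith : (0:ℝ) ≤ u - 30/20) (by linarith : (0:ℝ) ≤ (31:ℝ)/20 - u)]

set_option maxHeartbeats 1000000 in
private lemma case_31 (u : ℝ) (h1 : (31:ℝ)/20 ≤ u) (h2 : u ≤ (32:ℝ)/20) :
    Real.tanh u ^ 3 ≤ u / 2 := by
  refine piece (31/20) (221985627/10000000) u ?_ (by norm_num) (by linarith) (by linarith) ?_
  · have h := expk 31 (221985627/10000000) (by norm_num)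
    norm_num at h ⊢
    try linarith
  · nlinarith [sq_nonneg (u - 31/20), sq_nonneg (u - 32/20), sq_nonneg (u - 63/40),
      mul_nonneg (by linarith : (0:ℝ) ≤ u - 31/20) (by linarith : (0:ℝ) ≤ (32:ℝ)/20 - u)]

set_option maxHeartbeats 1000000 in
private lemma case_32 (u : ℝ) (h1 : (32:ℝ)/20 ≤ u) (h2 : u ≤ (33:ℝ)/20) :
    Real.tanh u ^ 3 ≤ u / 2 := by
  refine piece (32/20) (245332278/10000000) u ?_ (by norm_num) (by linarith) (by linarith) ?_
  · have h := expk 32 (245332278/10000000) (by norm_num)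
    norm_num at h ⊢
    try linarith
  · nlinarith [sq_nonneg (u - 32/20), sq_nonneg (u - 33/20), sq_nonneg (u - 65/40),
      mul_nonneg (by linarith : (0:ℝ) ≤ u - 32/20) (by linarith : (0:ℝ) ≤ (33:ℝ)/20 - u)]

set_option maxHeartbeats 1000000 in
private lemma case_33 (u : ℝ) (h1 : (33:ℝ)/20 ≤ u) (h2 : u ≤ (34:ℝ)/20) :
    Real.tanh u ^ 3 ≤ u / 2 := by
  refine piece (33/20) (271134339/10000000) u ?_ (by norm_num) (by linarith) (by linarith) ?_
  · have h := expk 33 (271134339/10000000) (by norm_num)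
    norm_num at h ⊢
    try linarith
  · nlinarith [sq_nonneg (u - 33/20), sq_nonneg (u - 34/20), sq_nonneg (u - 67/40),
      mul_nonneg (by linarith : (0:ℝ) ≤ u - 33/20) (by linarith : (0:ℝ) ≤ (34:ℝ)/20 - u)]

set_option maxHeartbeats 1000000 in
private lemma case_34 (u : ℝ) (h1 : (34:ℝ)/20 ≤ u) (h2 : u ≤ (35:ℝ)/20) :
    Real.tanh u ^ 3 ≤ u / 2 := by
  refine piece (34/20) (299650053/10000000) u ?_ (by norm_num) (by linarith) (by linarith) ?_
  · have h := expk 34 (299650053/10000000) (by norm_num)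
    norm_num at h ⊢
    try linarith
  · nlinarith [sq_nonneg (u - 34/20), sq_nonneg (u - 35/20), sq_nonneg (u - 69/40),
      mul_nonneg (by linarith : (0:ℝ) ≤ u - 34/20) (by linarith : (0:ℝ) ≤ (35:ℝ)/20 - u)]

set_option maxHeartbeats 1000000 in
private lemma case_35 (u : ℝ) (h1 : (35:ℝ)/20 ≤ u) (h2 : u ≤ (36:ℝ)/20) :
    Real.tanh u ^ 3 ≤ u / 2 := by
  refine piece (35/20) (331164818/10000000) u ?_ (by norm_num) (by linarith) (by linarith) ?_
  · have h := expk 35 (331164818/10000000) (by norm_num)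
    norm_num at h ⊢
    try linarith
  · nlinarith [sq_nonneg (u - 35/20), sq_nonneg (u - 36/20), sq_nonneg (u - 71/40),
      mul_nonneg (by linarith : (0:ℝ) ≤ u - 35/20) (by linarith : (0:ℝ) ≤ (36:ℝ)/20 - u)]

set_option maxHeartbeats 2000000 in
private lemma main_aux (u : ℝ) (hu0 : 0 < u) (hu1 : u ≤ 9/5) :
    Real.tanh u ^ 3 ≤ u / 2 := by
  rcases le_or_gt u ((1:ℝ)/20) with hc0 | hc0
  · exact case_0 u (by linarith) hc0
  rcases le_or_gt u ((2:ℝ)/20) with hc1 | hc1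
  · exact case_1 u (by linarith) hc1
  rcases le_or_gt u ((3:ℝ)/20) with hc2 | hc2
  · exact case_2 u (by linarith) hc2
  rcases le_or_gt u ((4:ℝ)/20) with hc3 | hc3
  · exact case_3 u (by linarith) hc3
  rcases le_or_gt u ((5:ℝ)/20) with hc4 | hc4
  · exact case_4 u (by linarith) hc4
  rcases le_or_gt u ((6:ℝ)/20) with hc5 | hc5
  · exact case_5 u (by linarith) hc5
  rcases le_or_gt u ((7:ℝ)/20) with hc6 | hc6
  · exact case_6 u (by linarith) hc6
  rcases le_or_gt u ((8:ℝ)/20) with hc7 | hc7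
  · exact case_7 u (by linarith) hc7
  rcases le_or_gt u ((9:ℝ)/20) with hc8 | hc8
  · exact case_8 u (by linarith) hc8
  rcases le_or_gt u ((10:ℝ)/20) with hc9 | hc9
  · exact case_9 u (by linarith) hc9
  rcases le_or_gt u ((11:ℝ)/20) with hc10 | hc10
  · exact case_10 u (by linarith) hc10
  rcases le_or_gt u ((12:ℝ)/20) with hc11 | hc11
  · exact case_11 u (by linarith) hc11
  rcases le_or_gt u ((13:ℝ)/20) with hc12 | hc12
  · exact case_12 u (by linarith) hc12
  rcases le_or_gt u ((14:ℝ)/20) with hc13 | hc13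
  · exact case_13 u (by linarith) hc13
  rcases le_or_gt u ((15:ℝ)/20) with hc14 | hc14
  · exact case_14 u (by linarith) hc14
  rcases le_or_gt u ((16:ℝ)/20) with hc15 | hc15
  · exact case_15 u (by linarith) hc15
  rcases le_or_gt u ((17:ℝ)/20) with hc16 | hc16
  · exact case_16 u (by linarith) hc16
  rcases le_or_gt u ((18:ℝ)/20) with hc17 | hc17
  · exact case_17 u (by linarith) hc17
  rcases le_or_gt u ((19:ℝ)/20) with hc18 | hc18
  · exact case_18 u (by linarith) hc18
  rcases le_or_gt u ((20:ℝ)/20) with hc19 | hc19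
  · exact case_19 u (by linarith) hc19
  rcases le_or_gt u ((21:ℝ)/20) with hc20 | hc20
  · exact case_20 u (by linarith) hc20
  rcases le_or_gt u ((22:ℝ)/20) with hc21 | hc21
  · exact case_21 u (by linarith) hc21
  rcases le_or_gt u ((23:ℝ)/20) with hc22 | hc22
  · exact case_22 u (by linarith) hc22
  rcases le_or_gt u ((24:ℝ)/20) with hc23 | hc23
  · exact case_23 u (by linarith) hc23
  rcases le_or_gt u ((25:ℝ)/20) with hc24 | hc24
  · exact case_24 u (by linarith) hc24
  rcases le_or_gt u ((26:ℝ)/20) with hc25 | hc25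
  · exact case_25 u (by linarith) hc25
  rcases le_or_gt u ((27:ℝ)/20) with hc26 | hc26
  · exact case_26 u (by linarith) hc26
  rcases le_or_gt u ((28:ℝ)/20) with hc27 | hc27
  · exact case_27 u (by linarith) hc27
  rcases le_or_gt u ((29:ℝ)/20) with hc28 | hc28
  · exact case_28 u (by linarith) hc28
  rcases le_or_gt u ((30:ℝ)/20) with hc29 | hc29
  · exact case_29 u (by linarith) hc29
  rcases le_or_gt u ((31:ℝ)/20) with hc30 | hc30
  · exact case_30 u (by linarith) hc30
  rcases le_or_gt u ((32:ℝ)/20) with hc31 | hc31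
  · exact case_31 u (by linarith) hc31
  rcases le_or_gt u ((33:ℝ)/20) with hc32 | hc32
  · exact case_32 u (by linarith) hc32
  rcases le_or_gt u ((34:ℝ)/20) with hc33 | hc33
  · exact case_33 u (by linarith) hc33
  rcases le_or_gt u ((35:ℝ)/20) with hc34 | hc34
  · exact case_34 u (by linarith) hc34
  exact case_35 u hc34.le (by linarith)

set_option maxHeartbeats 1000000 in
/-- The ratio bound `Ψ(e)/e ≤ 9/10` on `(0, 1]` for the transformation function
`Ψ(e) = tanh (1.8 e) ^ 3`. -/
theorem tanh_cubed_ratio_bound :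
    ∀ e ∈ Set.Ioc (0 : ℝ) 1, (Real.tanh (1.8 * e)) ^ 3 ≤ (9 / 10) * e := by
  intro e he
  obtain ⟨he0, he1⟩ := he
  have h := main_aux (1.8 * e) (by norm_num; linarith) (by norm_num; linarith)
  calc Real.tanh (1.8 * e) ^ 3 ≤ (1.8 * e) / 2 := h
    _ = (9/10) * e := by ring
end

section
/- Let E be a real inner product space and let λ, v̄, ū > 0 be real constants. Let x, ξ : ℝ → E be differentiable trajectories such that for all t: x(t) ≠ ξ(t), ‖x(t) − ξ(t)‖ ≤ λ, ‖x'(t)‖ ≤ v̄, and ‖ξ'(t)‖ ≤ ū. Define the reference velocity v_r(t) := −v̄·(tanh(1.8·‖x(t) − ξ(t)‖/λ))³ · (x(t) − ξ(t))/‖x(t) − ξ(t)‖. Then v_r is differentiable and ‖v_r'(t)‖ ≤ 2.25·v̄·(v̄ + ū)/λ for all t. -/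
/-!
Write `w = x - ξ`, `r = ‖w‖` and `φ r = -v̄ Ψ(r/λ)`, so that the reference velocity is the radial
field `(φ r / r) • w`. Its derivative is `φ r / r` times the component of `w'` orthogonal to `w`
plus `φ' r` times the component along `w`; each component has norm at most `‖w'‖ ≤ v̄ + ū`, which
gives the bound `(|φ r| / r + |φ' r|) (v̄ + ū) ≤ (0.9 + 1.35) v̄ (v̄ + ū) / λ`.
Here `Ψ' = 5.4 y² (1 - y²)` with `y = tanh` is at most `5.4 / 4 = 1.35`, while `Ψ(e) ≤ 0.9 e` on
`[0, 1]` amounts to `tanh³ s ≤ s / 2` on `[0, 1.8]`, which follows from the Padé bound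
`tanh s ≤ s (15 + s²) / (15 + 6 s²)`; the latter holds by monotonicity, using
`cosh s ≥ 1 + s² / 2 + s⁴ / 24`.
-/

open Real
open scoped InnerProductSpace

namespace Real

theorem hasDerivAt_tanh (x : ℝ) : HasDerivAt tanh (1 - tanh x ^ 2) x := by
  have h := (hasDerivAt_sinh x).div (hasDerivAt_cosh x) (cosh_pos x).ne'
  rw [show tanh = fun y => sinh y / cosh y from funext tanh_eq_sinh_div_cosh]
  refine h.congr_deriv ?_
  field_simp

theorem tanh_nonneg {x : ℝ} (hx : 0 ≤ x) : 0 ≤ tanh x := by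
  rw [tanh_eq_sinh_div_cosh]
  exact div_nonneg (sinh_nonneg_iff.2 hx) (cosh_pos x).le

theorem one_add_sq_div_two_add_pow_four_div_le_cosh (x : ℝ) :
    1 + x ^ 2 / 2 + x ^ 4 / 24 ≤ cosh x := by
  have h := sum_le_hasSum (Finset.range 3)
    (fun n _ => div_nonneg (by rw [pow_mul]; positivity) (by positivity)) (hasSum_cosh x)
  norm_num [Finset.sum_range_succ, Nat.factorial] at h
  linarith

theorem tanh_le_pade {x : ℝ} (hx : 0 ≤ x) : tanh x ≤ x * (15 + x ^ 2) / (15 + 6 * x ^ 2) := by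
  set g : ℝ → ℝ := fun y => y * (15 + y ^ 2) / (15 + 6 * y ^ 2) - tanh y
  have hg : ∀ y, HasDerivAt g
      ((225 - 45 * y ^ 2 + 6 * y ^ 4) / (15 + 6 * y ^ 2) ^ 2 - (1 - tanh y ^ 2)) y := by
    intro y
    have hnum : HasDerivAt (fun y : ℝ => y * (15 + y ^ 2)) (15 + 3 * y ^ 2) y :=
      ((hasDerivAt_id y).mul ((hasDerivAt_pow 2 y).const_add 15)).congr_deriv
        (by simp only [Nat.cast_ofNat, Nat.add_one_sub_one, pow_one, one_mul, id_eq]; ring)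
    have hden : HasDerivAt (fun y : ℝ => 15 + 6 * y ^ 2) (12 * y) y :=
      (((hasDerivAt_pow 2 y).const_mul 6).const_add 15).congr_deriv
        (by simp only [Nat.cast_ofNat, Nat.add_one_sub_one, pow_one]; ring)
    refine ((hnum.div hden (by positivity)).sub (hasDerivAt_tanh y)).congr_deriv ?_
    field_simp
    ring
  have hmono : Monotone g := by
    refine monotone_of_deriv_nonneg (fun y => (hg y).differentiableAt) fun y => ?_
    have hcosh : 1 - tanh y ^ 2 = 1 / cosh y ^ 2 := by
      rw [tanh_eq_sinh_div_cosh]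
      field_simp
      linear_combination cosh_sq_sub_sinh_sq y
    have hquartic : 0 < 225 - 45 * y ^ 2 + 6 * y ^ 4 := by nlinarith [sq_nonneg (y ^ 2 - 15 / 4)]
    rw [(hg y).deriv, hcosh, sub_nonneg, div_le_div_iff₀ (by positivity) (by positivity)]
    calc 1 * (15 + 6 * y ^ 2) ^ 2
        ≤ 1 * (15 + 6 * y ^ 2) ^ 2 + y ^ 6 * (216 + 297 * y ^ 2 + 99 * y ^ 4 + 6 * y ^ 6) / 576 :=
          le_add_of_nonneg_right (by positivity)
      _ = (1 + y ^ 2 / 2 + y ^ 4 / 24) ^ 2 * (225 - 45 * y ^ 2 + 6 * y ^ 4) := by ring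
      _ ≤ cosh y ^ 2 * (225 - 45 * y ^ 2 + 6 * y ^ 4) := by
          gcongr
          exact one_add_sq_div_two_add_pow_four_div_le_cosh y
      _ = (225 - 45 * y ^ 2 + 6 * y ^ 4) * cosh y ^ 2 := mul_comm _ _
  simpa [g] using hmono hx

theorem tanh_pow_three_le_half {x : ℝ} (h0 : 0 ≤ x) (h1 : x ≤ 1.8) : tanh x ^ 3 ≤ x / 2 := by
  have hpoly : 2 * x ^ 2 * (15 + x ^ 2) ^ 3 ≤ (15 + 6 * x ^ 2) ^ 3 := by
    have hu0 := sq_nonneg x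
    have hu1 : 0 ≤ 81 / 25 - x ^ 2 := by nlinarith
    nlinarith [mul_nonneg hu0 hu1, mul_nonneg (mul_nonneg hu0 hu1) (sq_nonneg (x ^ 2 - 2)),
      mul_nonneg hu0 (sq_nonneg (x ^ 2 - 21 / 10))]
  calc tanh x ^ 3 ≤ (x * (15 + x ^ 2) / (15 + 6 * x ^ 2)) ^ 3 := by
        gcongr
        exacts [tanh_nonneg h0, tanh_le_pade h0]
    _ ≤ x / 2 := by
        rw [div_pow, div_le_div_iff₀ (by positivity) two_pos]
        nlinarith [mul_le_mul_of_nonneg_left hpoly h0]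

end Real

/-- The transformation function `Ψ` of the confinement law. -/
noncomputable def confinementTransform (s : ℝ) : ℝ := tanh (1.8 * s) ^ 3

theorem hasDerivAt_confinementTransform (s : ℝ) :
    HasDerivAt confinementTransform (5.4 * (tanh (1.8 * s) ^ 2 * (1 - tanh (1.8 * s) ^ 2))) s :=
  (((hasDerivAt_tanh _).comp s ((hasDerivAt_id s).const_mul 1.8)).pow 3).congr_deriv
    (by simp only [Nat.cast_ofNat, id_eq, Function.comp_apply, Nat.add_one_sub_one, mul_one]; ring)

theorem abs_deriv_confinementTransform_le (s : ℝ) : |deriv confinementTransform s| ≤ 1.35 := by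
  rw [(hasDerivAt_confinementTransform s).deriv]
  have h1 := tanh_sq_lt_one (1.8 * s)
  have h0 := sq_nonneg (tanh (1.8 * s))
  rw [abs_le]
  constructor <;> nlinarith [sq_nonneg (tanh (1.8 * s) ^ 2 - 1 / 2)]

theorem confinementTransform_nonneg {s : ℝ} (hs : 0 ≤ s) : 0 ≤ confinementTransform s :=
  pow_nonneg (tanh_nonneg (by positivity)) 3

theorem confinementTransform_le {s : ℝ} (h0 : 0 ≤ s) (h1 : s ≤ 1) :
    confinementTransform s ≤ 0.9 * s := by
  have := tanh_pow_three_le_half (x := 1.8 * s) (by positivity) (by linarith)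
  rw [confinementTransform]
  linarith

theorem confinementGain_le {lam vbar r : ℝ} (hlam : 0 < lam) (hvbar : 0 ≤ vbar) (hr : 0 < r)
    (hrl : r ≤ lam) :
    |-(vbar * confinementTransform (r / lam))| / r
      + |-(vbar * (deriv confinementTransform (r / lam) * (1 / lam)))| ≤ 2.25 * vbar / lam := by
  have he0 : 0 ≤ r / lam := by positivity
  have he1 : r / lam ≤ 1 := (div_le_one hlam).2 hrl
  rw [abs_neg, abs_neg, abs_mul, abs_mul, abs_mul, abs_of_nonneg hvbar,
    abs_of_nonneg (confinementTransform_nonneg he0), abs_of_pos (one_div_pos.2 hlam)]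
  have hΨ : vbar * confinementTransform (r / lam) / r ≤ 0.9 * vbar / lam := by
    rw [div_le_div_iff₀ hr hlam]
    calc vbar * confinementTransform (r / lam) * lam ≤ vbar * (0.9 * (r / lam)) * lam := by
          gcongr; exact confinementTransform_le he0 he1
      _ = 0.9 * vbar * r := by field_simp
  have hΨ' : vbar * (|deriv confinementTransform (r / lam)| * (1 / lam)) ≤ 1.35 * vbar / lam := by
    calc _ ≤ vbar * (1.35 * (1 / lam)) := by
          gcongr; exact abs_deriv_confinementTransform_le _
      _ = 1.35 * vbar / lam := by ring
  calc _ ≤ 0.9 * vbar / lam + 1.35 * vbar / lam := add_le_add hΨ hΨ'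
    _ = 2.25 * vbar / lam := by ring

section RadialField

variable {E : Type*} [NormedAddCommGroup E] [InnerProductSpace ℝ E]

theorem HasDerivAt.norm_of_ne_zero {w : ℝ → E} {w' : E} {t : ℝ} (hw : HasDerivAt w w' t)
    (h0 : w t ≠ 0) : HasDerivAt (fun t => ‖w t‖) (⟪w t, w'⟫_ℝ / ‖w t‖) t := by
  have h := hw.norm_sq.sqrt (by positivity)
  simp only [sqrt_sq (norm_nonneg _)] at h
  exact h.congr_deriv (by field_simp)

theorem norm_smul_orthogonal_add_smul_starProjection_le (K : Submodule ℝ E)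
    [K.HasOrthogonalProjection] (a b : ℝ) (v : E) :
    ‖a • Kᗮ.starProjection v + b • K.starProjection v‖ ≤ (|a| + |b|) * ‖v‖ :=
  calc ‖a • Kᗮ.starProjection v + b • K.starProjection v‖
      ≤ |a| * ‖Kᗮ.starProjection v‖ + |b| * ‖K.starProjection v‖ := by
        grw [norm_add_le, norm_smul, norm_smul, Real.norm_eq_abs, Real.norm_eq_abs]
    _ ≤ |a| * ‖v‖ + |b| * ‖v‖ := by
        gcongr <;> exact Submodule.norm_starProjection_apply_le _ v
    _ = (|a| + |b|) * ‖v‖ := by ring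

theorem HasDerivAt.div_norm_smul {w : ℝ → E} {w' : E} {t : ℝ} {φ : ℝ → ℝ} {φ' : ℝ}
    (hw : HasDerivAt w w' t) (h0 : w t ≠ 0) (hφ : HasDerivAt φ φ' ‖w t‖) :
    HasDerivAt (fun t => (φ ‖w t‖ / ‖w t‖) • w t)
      ((φ ‖w t‖ / ‖w t‖) • (ℝ ∙ w t)ᗮ.starProjection w' + φ' • (ℝ ∙ w t).starProjection w') t := by
  have hr : 0 < ‖w t‖ := norm_pos_iff.2 h0
  have hnorm := hw.norm_of_ne_zero h0
  refine (((hφ.comp t hnorm).div hnorm hr.ne').smul hw).congr_deriv ?_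
  simp only [Function.comp_apply, Pi.div_apply, Submodule.starProjection_orthogonal_val,
    Submodule.starProjection_singleton, RCLike.ofReal_real_eq_id, id]
  match_scalars <;> field_simp
  ring

theorem norm_deriv_div_norm_smul_le {w : ℝ → E} {w' : E} {t : ℝ} {φ : ℝ → ℝ} {φ' : ℝ}
    (hw : HasDerivAt w w' t) (h0 : w t ≠ 0) (hφ : HasDerivAt φ φ' ‖w t‖) :
    ‖deriv (fun t => (φ ‖w t‖ / ‖w t‖) • w t) t‖ ≤ (|φ ‖w t‖| / ‖w t‖ + |φ'|) * ‖w'‖ := by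
  rw [(hw.div_norm_smul h0 hφ).deriv]
  convert norm_smul_orthogonal_add_smul_starProjection_le (ℝ ∙ w t) _ φ' w' using 3
  rw [abs_div, abs_norm]

end RadialField

theorem reference_acceleration_bound_general
    {E : Type*} [NormedAddCommGroup E] [InnerProductSpace ℝ E]
    (lam vbar ubar : ℝ) (hlam : 0 < lam) (hvbar : 0 < vbar)
    (x ξ : ℝ → E) (hx : Differentiable ℝ x) (hξ : Differentiable ℝ ξ)
    (hne : ∀ t : ℝ, x t ≠ ξ t)
    (hball : ∀ t : ℝ, ‖x t - ξ t‖ ≤ lam)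
    (hxv : ∀ t : ℝ, ‖deriv x t‖ ≤ vbar)
    (hξv : ∀ t : ℝ, ‖deriv ξ t‖ ≤ ubar) :
    Differentiable ℝ (fun t : ℝ =>
      (-(vbar * (Real.tanh (1.8 * (‖x t - ξ t‖ / lam))) ^ 3 / ‖x t - ξ t‖)) • (x t - ξ t)) ∧
    ∀ t : ℝ, ‖deriv (fun t : ℝ =>
      (-(vbar * (Real.tanh (1.8 * (‖x t - ξ t‖ / lam))) ^ 3 / ‖x t - ξ t‖)) • (x t - ξ t)) t‖
        ≤ 2.25 * vbar * (vbar + ubar) / lam := by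
  set φ : ℝ → ℝ := fun r => -(vbar * confinementTransform (r / lam))
  have hφ (r : ℝ) :
      HasDerivAt φ (-(vbar * (deriv confinementTransform (r / lam) * (1 / lam)))) r :=
    (((hasDerivAt_confinementTransform _).differentiableAt.hasDerivAt.comp r
      ((hasDerivAt_id r).div_const lam)).const_mul vbar).neg
  have hw (t : ℝ) : HasDerivAt (fun t => x t - ξ t) (deriv x t - deriv ξ t) t :=
    (hx t).hasDerivAt.sub (hξ t).hasDerivAt
  have hw0 (t : ℝ) : x t - ξ t ≠ 0 := sub_ne_zero.2 (hne t)
  have hv : (fun t => (-(vbar * tanh (1.8 * (‖x t - ξ t‖ / lam)) ^ 3 / ‖x t - ξ t‖)) • (x t - ξ t))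
      = fun t => (φ ‖x t - ξ t‖ / ‖x t - ξ t‖) • (x t - ξ t) := by
    simp only [φ, confinementTransform, neg_div]
  rw [hv]
  refine ⟨fun t => ((hw t).div_norm_smul (hw0 t) (hφ _)).differentiableAt, fun t => ?_⟩
  calc _ ≤ (|φ ‖x t - ξ t‖| / ‖x t - ξ t‖
          + |-(vbar * (deriv confinementTransform (‖x t - ξ t‖ / lam) * (1 / lam)))|)
          * ‖deriv x t - deriv ξ t‖ := norm_deriv_div_norm_smul_le (hw t) (hw0 t) (hφ _)
    _ ≤ 2.25 * vbar / lam * (vbar + ubar) :=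
        mul_le_mul (confinementGain_le hlam hvbar.le (norm_pos_iff.2 (hw0 t)) (hball t))
          ((norm_sub_le _ _).trans (add_le_add (hxv t) (hξv t))) (norm_nonneg _) (by positivity)
    _ = 2.25 * vbar * (vbar + ubar) / lam := by ring

/-- Reference-acceleration bound (Appendix B): for the velocity-level confinement
law `v_r(t) = -v̄·tanh³(1.8·‖x t − ξ t‖/λ)·(x t − ξ t)/‖x t − ξ t‖`, the time
derivative of `v_r` is uniformly bounded by `2.25·v̄·(v̄ + ū)/λ`. -/
theorem reference_acceleration_bound
    {E : Type*} [NormedAddCommGroup E] [InnerProductSpace ℝ E]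
    (lam vbar ubar : ℝ) (hlam : 0 < lam) (hvbar : 0 < vbar) (hubar : 0 < ubar)
    (x ξ : ℝ → E) (hx : Differentiable ℝ x) (hξ : Differentiable ℝ ξ)
    (hne : ∀ t : ℝ, x t ≠ ξ t)
    (hball : ∀ t : ℝ, ‖x t - ξ t‖ ≤ lam)
    (hxv : ∀ t : ℝ, ‖deriv x t‖ ≤ vbar)
    (hξv : ∀ t : ℝ, ‖deriv ξ t‖ ≤ ubar) :
    Differentiable ℝ (fun t : ℝ =>
      (-(vbar * (Real.tanh (1.8 * (‖x t - ξ t‖ / lam))) ^ 3 / ‖x t - ξ t‖)) • (x t - ξ t)) ∧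
    ∀ t : ℝ, ‖deriv (fun t : ℝ =>
      (-(vbar * (Real.tanh (1.8 * (‖x t - ξ t‖ / lam))) ^ 3 / ‖x t - ξ t‖)) • (x t - ξ t)) t‖
        ≤ 2.25 * vbar * (vbar + ubar) / lam :=
  reference_acceleration_bound_general lam vbar ubar hlam hvbar x ξ hx hξ hne hball hxv hξv
end
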